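/- Let ≼ be an inclusion-monotone preorder on Finset α and let C be a consistency predicate with C ∅. Then for every finite G : Finset α: there exists a nonempty ≼-preferred repair of G if and only if the empty set ∅ is not a ≼-preferred repair of G. -/

import Mathlib

/-- The strict part of a preference relation on finite databases. -/
def strictPart {α : Type*} [DecidableEq α] (r : Finset α → Finset α → Prop)
    (H H' : Finset α) : Prop :=
  r H H' ∧ ¬ r H' H

/-- `H` is a `r`-preferred repair of `G` with respect to consistency predicate `C`. -/
def PreferredRepair {α : Type*} [DecidableEq α] (r : Finset α → Finset α → Prop)
    (C : Finset α → Prop) (G H : Finset α) : Prop :=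
  C H ∧ H ⊆ G ∧ ¬ ∃ H'', H'' ⊆ G ∧ H'' ≠ H ∧ C H'' ∧ strictPart r H H''

/-- `H` is a subset repair of `G`: an inclusion-maximal consistent subset of `G`. -/
def SubsetRepair {α : Type*} [DecidableEq α] (C : Finset α → Prop)
    (G H : Finset α) : Prop :=
  C H ∧ H ⊆ G ∧ ¬ ∃ H'', C H'' ∧ H ⊂ H'' ∧ H'' ⊆ G

/-- A relation on finite sets is inclusion-monotone if strict inclusion implies
strict preference. -/
def InclMonotone {α : Type*} [DecidableEq α] (r : Finset α → Finset α → Prop) : Prop :=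
  ∀ H H' : Finset α, H ⊂ H' → strictPart r H H'

/- Among the consistent subsets of `G` strictly preferred to `∅` (there is one unless `∅` is a
preferred repair), a maximal one for the strict preference is a preferred repair, and it is nonempty
since the strict preference is irreflexive. Conversely, by inclusion-monotonicity any nonempty
consistent subset of `G` is strictly preferred to `∅`. -/

theorem Finset.exists_mem_forall_not_rel {β : Type*} (rel : β → β → Prop) [IsStrictOrder β rel]
    {s : Finset β} (hs : s.Nonempty) : ∃ m ∈ s, ∀ x ∈ s, ¬ rel m x := by
  let := partialOrderOfSO rel
  obtain ⟨m, hm⟩ := s.exists_maximal hs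
  exact ⟨m, hm.prop, fun x hx hmx => hm.not_gt hx hmx⟩

section StrictPart

variable {α : Type*} [DecidableEq α] {r : Finset α → Finset α → Prop}

theorem strictPart_irrefl (H : Finset α) : ¬ strictPart r H H :=
  fun h => h.2 h.1

theorem ne_of_strictPart {H H' : Finset α} (h : strictPart r H H') : H ≠ H' := by
  rintro rfl
  exact strictPart_irrefl H h

theorem strictPart_trans (htrans : ∀ H₁ H₂ H₃, r H₁ H₂ → r H₂ H₃ → r H₁ H₃)
    {H₁ H₂ H₃ : Finset α} (h₁₂ : strictPart r H₁ H₂) (h₂₃ : strictPart r H₂ H₃) :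
    strictPart r H₁ H₃ :=
  ⟨htrans _ _ _ h₁₂.1 h₂₃.1, fun h₃₁ => h₁₂.2 (htrans _ _ _ h₂₃.1 h₃₁)⟩

theorem isStrictOrder_strictPart (htrans : ∀ H₁ H₂ H₃, r H₁ H₂ → r H₂ H₃ → r H₁ H₃) :
    IsStrictOrder (Finset α) (strictPart r) where
  irrefl := strictPart_irrefl
  trans _ _ _ := strictPart_trans htrans

end StrictPart

section PreferredRepair

variable {α : Type*} [DecidableEq α] {r : Finset α → Finset α → Prop} {C : Finset α → Prop}
  {G H : Finset α}

theorem preferredRepair_iff_forall_not_strictPart :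
    PreferredRepair r C G H ↔
      C H ∧ H ⊆ G ∧ ∀ H' ⊆ G, C H' → ¬ strictPart r H H' := by
  unfold PreferredRepair
  refine and_congr_right fun _ => and_congr_right fun _ => ?_
  constructor
  · rintro h H' hH'G hCH' hHH'
    exact h ⟨H', hH'G, (ne_of_strictPart hHH').symm, hCH', hHH'⟩
  · rintro h ⟨H', hH'G, -, hCH', hHH'⟩
    exact h H' hH'G hCH' hHH'

theorem exists_preferredRepair_strictPart
    (htrans : ∀ H₁ H₂ H₃, r H₁ H₂ → r H₂ H₃ → r H₁ H₃) {H₀ : Finset α}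
    (hH₀G : H₀ ⊆ G) (hCH₀ : C H₀) (hHH₀ : strictPart r H H₀) :
    ∃ H', PreferredRepair r C G H' ∧ strictPart r H H' := by
  classical
  have := isStrictOrder_strictPart htrans
  set S := G.powerset.filter fun H' => C H' ∧ strictPart r H H'
  have mem_S {H' : Finset α} : H' ∈ S ↔ H' ⊆ G ∧ C H' ∧ strictPart r H H' := by
    simp only [S, Finset.mem_filter, Finset.mem_powerset]
  obtain ⟨M, hMS, hM⟩ := S.exists_mem_forall_not_rel (strictPart r) ⟨H₀, mem_S.2 ⟨hH₀G, hCH₀, hHH₀⟩⟩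
  obtain ⟨hMG, hCM, hHM⟩ := mem_S.1 hMS
  refine ⟨M, preferredRepair_iff_forall_not_strictPart.2 ⟨hCM, hMG, fun H' hH'G hCH' hMH' => ?_⟩, hHM⟩
  exact hM H' (mem_S.2 ⟨hH'G, hCH', strictPart_trans htrans hHM hMH'⟩) hMH'

theorem PreferredRepair.eq_empty_of_empty_preferredRepair (hmono : InclMonotone r)
    (h : PreferredRepair r C G ∅) (hH : PreferredRepair r C G H) : H = ∅ := by
  by_contra hne
  exact (preferredRepair_iff_forall_not_strictPart.1 h).2.2 H hH.2.1 hH.1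
    (hmono ∅ H (Finset.empty_ssubset.2 (Finset.nonempty_iff_ne_empty.2 hne)))

end PreferredRepair

theorem nonempty_preferred_repair_iff_empty_not_preferred_general
    {α : Type*} [DecidableEq α] (r : Finset α → Finset α → Prop)
    (htrans : ∀ H₁ H₂ H₃, r H₁ H₂ → r H₂ H₃ → r H₁ H₃)
    (hmono : InclMonotone r)
    (C : Finset α → Prop) (hC : C ∅) (G : Finset α) :
    (∃ H, PreferredRepair r C G H ∧ H ≠ ∅) ↔ ¬ PreferredRepair r C G ∅ := by
  constructor
  · rintro ⟨H, hH, hne⟩ hempty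
    exact hne (hempty.eq_empty_of_empty_preferredRepair hmono hH)
  · intro hempty
    obtain ⟨H₀, hH₀G, hCH₀, hemptyH₀⟩ : ∃ H₀ ⊆ G, C H₀ ∧ strictPart r ∅ H₀ := by
      simpa [preferredRepair_iff_forall_not_strictPart, hC] using hempty
    obtain ⟨H, hH, hemptyH⟩ := exists_preferredRepair_strictPart htrans hH₀G hCH₀ hemptyH₀
    exact ⟨H, hH, (ne_of_strictPart hemptyH).symm⟩

theorem nonempty_preferred_repair_iff_empty_not_preferred
    {α : Type*} [DecidableEq α] (r : Finset α → Finset α → Prop)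
    (hrefl : ∀ H, r H H)
    (htrans : ∀ H₁ H₂ H₃, r H₁ H₂ → r H₂ H₃ → r H₁ H₃)
    (hmono : InclMonotone r)
    (C : Finset α → Prop) (hC : C ∅) (G : Finset α) :
    (∃ H, PreferredRepair r C G H ∧ H ≠ ∅) ↔ ¬ PreferredRepair r C G ∅ :=
  nonempty_preferred_repair_iff_empty_not_preferred_general r htrans hmono C hC G
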